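/- arXiv:1307.2225 — 2 statements merged into one kernel-verified Lean document; each statement's English description precedes it below -/
import Mathlib

section
/- Round-robin envy bound: suppose the cake is divided into m intervals and n agents pick pieces in round-robin order (agent 1,2,...,n repeating), each picking a remaining piece. If agent i values every piece at most ε, and in every round starting from its own pick agent i picks a piece it weakly prefers to all remaining pieces, then agent i's total value is within ε of the value of any other agent's total allocation according to V_i; that is, V_i(X_i) ≥ V_i(X_j) − ε for all j. -/
open Finset

lemma sum_le_sum_via_inj {m : ℕ} (S T : Finset (Fin m)) (f : Fin m → ℝ)
    (hf : ∀ t, 0 ≤ f t) (e : Fin m → Fin m)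
    (hinj : Set.InjOn e S) (hmaps : ∀ t ∈ S, e t ∈ T)
    (hle : ∀ t ∈ S, f t ≤ f (e t)) :
    ∑ t ∈ S, f t ≤ ∑ t ∈ T, f t := by
  calc ∑ t ∈ S, f t ≤ ∑ t ∈ S, f (e t) := Finset.sum_le_sum hle
    _ = ∑ t ∈ S.image e, f t := (Finset.sum_image (fun a ha b hb => hinj ha hb)).symm
    _ ≤ ∑ t ∈ T, f t := Finset.sum_le_sum_of_subset_of_nonneg
        (fun t ht => by
          obtain ⟨a, ha, rfl⟩ := Finset.mem_image.mp ht
          exact hmaps a ha)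
        (fun t _ _ => hf t)

lemma mul_add_mod_eq {n a q : ℕ} (ha : a < n) : (n * q + a) % n = a := by
  rw [Nat.mul_add_mod, Nat.mod_eq_of_lt ha]

/-- Round-robin envy bound: if agent i values every piece at most ε and picks
greedily at each of its turns, then its total value is within ε of its value
for any other agent's allocation. Turn t (0-indexed, t : Fin m) is taken by
agent t % n; π t is the piece picked at turn t; val is agent i's value for
each piece. -/
theorem round_robin_envy_bound
    (n m : ℕ) (hn : 0 < n)
    (val : Fin m → ℝ) (hnn : ∀ t, 0 ≤ val t)
    (ε : ℝ) (hε : 0 ≤ ε) (hsmall : ∀ t, val t ≤ ε)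
    (π : Fin m → Fin m) (hπ : Function.Bijective π)
    (i : Fin n)
    (hgreedy : ∀ t : Fin m, (t : ℕ) % n = (i : ℕ) →
      ∀ s : Fin m, (t : ℕ) ≤ (s : ℕ) → val (π s) ≤ val (π t)) :
    ∀ j : Fin n,
      (∑ t ∈ univ.filter (fun t : Fin m => (t : ℕ) % n = (j : ℕ)), val (π t)) - ε ≤
        ∑ t ∈ univ.filter (fun t : Fin m => (t : ℕ) % n = (i : ℕ)), val (π t) := by
  intro j
  classical
  have hi : (i : ℕ) < n := i.isLt
  have hj : (j : ℕ) < n := j.isLt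
  set Si := univ.filter (fun t : Fin m => (t : ℕ) % n = (i : ℕ)) with hSi
  set Sj := univ.filter (fun t : Fin m => (t : ℕ) % n = (j : ℕ)) with hSj
  -- key decomposition: any t in Sj is of the form n * q + j
  have hdecomp : ∀ t : Fin m, (t : ℕ) % n = (j : ℕ) →
      ∃ q : ℕ, (t : ℕ) = n * q + (j : ℕ) := by
    intro t ht
    exact ⟨(t : ℕ) / n, by have := Nat.mod_add_div (t : ℕ) n; omega⟩
  rcases le_or_gt (i : ℕ) (j : ℕ) with hij | hij
  · -- i ≤ j : each of j's picks dominated by i's pick in same round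
    have key : ∑ t ∈ Sj, val (π t) ≤ ∑ t ∈ Si, val (π t) := by
      apply sum_le_sum_via_inj Sj Si (fun t => val (π t)) (fun t => hnn (π t))
        (fun t => if h : (j : ℕ) ≤ (t : ℕ)
          then ⟨(t : ℕ) - (j : ℕ) + (i : ℕ), by have := t.isLt; omega⟩ else t)
      · intro a ha b hb hab
        simp only [hSj, mem_coe, mem_filter, mem_univ, true_and] at ha hb
        have ha' : (j : ℕ) ≤ (a : ℕ) := ha ▸ Nat.mod_le _ _
        have hb' : (j : ℕ) ≤ (b : ℕ) := hb ▸ Nat.mod_le _ _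
        simp only [dif_pos ha', dif_pos hb'] at hab
        have h := congrArg Fin.val hab
        simp only at h
        exact Fin.ext (by omega)
      · intro t ht
        simp only [hSj, mem_filter, mem_univ, true_and] at ht
        simp only [hSi, mem_filter, mem_univ, true_and]
        obtain ⟨q, hq⟩ := hdecomp t ht
        have h1 : (t : ℕ) - (j : ℕ) + (i : ℕ) = n * q + (i : ℕ) := by omega
        rw [dif_pos (show (j : ℕ) ≤ (t : ℕ) by omega)]
        simp only [h1, mul_add_mod_eq hi]
      · intro t ht
        simp only [hSj, mem_filter, mem_univ, true_and] at ht
        obtain ⟨q, hq⟩ := hdecomp t ht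
        rw [dif_pos (show (j : ℕ) ≤ (t : ℕ) by omega)]
        refine hgreedy _ ?_ t ?_
        · show ((t : ℕ) - (j : ℕ) + (i : ℕ)) % n = (i : ℕ)
          have h1 : (t : ℕ) - (j : ℕ) + (i : ℕ) = n * q + (i : ℕ) := by omega
          simp only [h1, mul_add_mod_eq hi]
        · show (t : ℕ) - (j : ℕ) + (i : ℕ) ≤ (t : ℕ)
          omega
    linarith
  · -- j < i : drop j's round-0 pick, match the rest with i's previous-round picks
    set T := Sj.filter (fun t : Fin m => n ≤ (t : ℕ)) with hT
    set R := Sj.filter (fun t : Fin m => ¬ n ≤ (t : ℕ)) with hR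
    have hsplit : ∑ t ∈ Sj, val (π t) = ∑ t ∈ T, val (π t) + ∑ t ∈ R, val (π t) := by
      rw [hT, hR, Finset.sum_filter_add_sum_filter_not]
    have hRcard : R.card ≤ 1 := by
      apply Finset.card_le_one.mpr
      intro a ha b hb
      simp only [hR, hSj, mem_filter, mem_univ, true_and, not_le] at ha hb
      have ha' : (a : ℕ) = (j : ℕ) := by have := Nat.mod_eq_of_lt ha.2; omega
      have hb' : (b : ℕ) = (j : ℕ) := by have := Nat.mod_eq_of_lt hb.2; omega
      exact Fin.ext (by omega)
    have hRsum : ∑ t ∈ R, val (π t) ≤ ε := by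
      calc ∑ t ∈ R, val (π t) ≤ ∑ _t ∈ R, ε := Finset.sum_le_sum (fun t _ => hsmall (π t))
        _ = R.card • ε := by rw [Finset.sum_const]
        _ ≤ 1 • ε := nsmul_le_nsmul_left hε hRcard
        _ = ε := one_smul _ _
    have key : ∑ t ∈ T, val (π t) ≤ ∑ t ∈ Si, val (π t) := by
      apply sum_le_sum_via_inj T Si (fun t => val (π t)) (fun t => hnn (π t))
        (fun t => if h : (j : ℕ) + n ≤ (t : ℕ)
          then ⟨(t : ℕ) - (j : ℕ) + (i : ℕ) - n, by have := t.isLt; omega⟩ else t)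
      · intro a ha b hb hab
        simp only [hT, hSj, mem_coe, mem_filter, mem_univ, true_and] at ha hb
        obtain ⟨qa, hqa⟩ := hdecomp a ha.1
        obtain ⟨qb, hqb⟩ := hdecomp b hb.1
        have hqa1 : 1 ≤ qa := by
          by_contra h
          have h0 : qa = 0 := by omega
          rw [h0] at hqa; simp at hqa; have := ha.2; omega
        have hqb1 : 1 ≤ qb := by
          by_contra h
          have h0 : qb = 0 := by omega
          rw [h0] at hqb; simp at hqb; have := hb.2; omega
        have hca : (j : ℕ) + n ≤ (a : ℕ) := by
          have := Nat.mul_le_mul_left n hqa1; omega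
        have hcb : (j : ℕ) + n ≤ (b : ℕ) := by
          have := Nat.mul_le_mul_left n hqb1; omega
        simp only [dif_pos hca, dif_pos hcb] at hab
        have h := congrArg Fin.val hab
        simp only at h
        exact Fin.ext (by omega)
      · intro t ht
        simp only [hT, hSj, mem_filter, mem_univ, true_and] at ht
        simp only [hSi, mem_filter, mem_univ, true_and]
        obtain ⟨q, hq⟩ := hdecomp t ht.1
        have hq1 : 1 ≤ q := by
          by_contra h
          have : q = 0 := by omega
          subst this
          simp at hq
          omega
        have h1 : (t : ℕ) - (j : ℕ) + (i : ℕ) - n = n * (q - 1) + (i : ℕ) := by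
          have : n * q = n * (q - 1) + n := by
            have := Nat.mul_sub n q 1
            have := Nat.mul_le_mul_left n hq1
            omega
          omega
        rw [dif_pos (show (j : ℕ) + n ≤ (t : ℕ) by
          have := Nat.mul_le_mul_left n hq1; omega)]
        simp only [h1, mul_add_mod_eq hi]
      · intro t ht
        simp only [hT, hSj, mem_filter, mem_univ, true_and] at ht
        obtain ⟨q, hq⟩ := hdecomp t ht.1
        have hq1 : 1 ≤ q := by
          by_contra h
          have : q = 0 := by omega
          subst this
          simp at hq
          have := ht.2
          omega
        have hmul : n * q = n * (q - 1) + n := by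
          have := Nat.mul_sub n q 1
          have := Nat.mul_le_mul_left n hq1
          omega
        rw [dif_pos (show (j : ℕ) + n ≤ (t : ℕ) by
          have := Nat.mul_le_mul_left n hq1; omega)]
        refine hgreedy _ ?_ t ?_
        · show ((t : ℕ) - (j : ℕ) + (i : ℕ) - n) % n = (i : ℕ)
          have h1 : (t : ℕ) - (j : ℕ) + (i : ℕ) - n = n * (q - 1) + (i : ℕ) := by omega
          simp only [h1, mul_add_mod_eq hi]
        · show (t : ℕ) - (j : ℕ) + (i : ℕ) - n ≤ (t : ℕ)
          omega
    linarith
end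

section
/- Non-existence of exact NE in Algorithm 1: consider the one-player game where the agent picks three points x, y, z ∈ [0,1]; if x < y < z the agent receives its choice of [x,y] or [y,z], otherwise it receives nothing. If the agent's value density is continuous and strictly positive, then this game has no optimal strategy: for every strategy there is another with strictly higher utility. Equivalently, sup utility equals V([0,1]) = 1 but is never attained. -/
/-- Utility in the one-player game of Algorithm 1: the agent cuts at x, y, z and,
if x < y < z, receives the better of [x,y] and [y,z]; otherwise nothing. -/
noncomputable def algOneUtility (v : ℝ → ℝ) (x y z : ℝ) : ℝ :=
  if x < y ∧ y < z then max (∫ t in x..y, v t) (∫ t in y..z, v t) else 0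

section aux

variable (v : ℝ → ℝ)

lemma algOne_int (hcont : Continuous v) :
    ∀ a b : ℝ, IntervalIntegrable v MeasureTheory.volume a b :=
  fun a b => hcont.intervalIntegrable a b

lemma algOne_pos (hcont : Continuous v) (hpos : ∀ t, 0 < v t) {a b : ℝ} (hab : a < b) :
    0 < ∫ t in a..b, v t :=
  intervalIntegral.intervalIntegral_pos_of_pos (hcont.intervalIntegrable a b) hpos hab

lemma algOne_lt_one (hcont : Continuous v) (hpos : ∀ t, 0 < v t)
    (hnorm : (∫ t in (0:ℝ)..1, v t) = 1)
    {x y z : ℝ} (hx : 0 ≤ x) (hxy : x < y) (hyz : y < z) (hz : z ≤ 1) :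
    max (∫ t in x..y, v t) (∫ t in y..z, v t) < 1 := by
  have hI := algOne_int v hcont
  have hsplit : (∫ t in (0:ℝ)..x, v t) + (∫ t in x..y, v t) + (∫ t in y..z, v t)
      + (∫ t in z..(1:ℝ), v t) = 1 := by
    rw [intervalIntegral.integral_add_adjacent_intervals (hI 0 x) (hI x y),
      intervalIntegral.integral_add_adjacent_intervals (hI 0 y) (hI y z),
      intervalIntegral.integral_add_adjacent_intervals (hI 0 z) (hI z 1), hnorm]
  have h0x : 0 ≤ ∫ t in (0:ℝ)..x, v t :=
    intervalIntegral.integral_nonneg hx (fun t _ => (hpos t).le)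
  have hz1 : 0 ≤ ∫ t in z..(1:ℝ), v t :=
    intervalIntegral.integral_nonneg hz (fun t _ => (hpos t).le)
  have hxy' := algOne_pos v hcont hpos hxy
  have hyz' := algOne_pos v hcont hpos hyz
  rw [max_lt_iff]
  constructor <;> linarith

/-- For every u < 1 there is t ∈ (0,1) with u < ∫ t..1 v. -/
lemma algOne_approx (hcont : Continuous v) (hpos : ∀ t, 0 < v t)
    (hnorm : (∫ t in (0:ℝ)..1, v t) = 1) {u : ℝ} (hu : u < 1) :
    ∃ t : ℝ, 0 < t ∧ t < 1 ∧ u < ∫ s in t..(1:ℝ), v s := by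
  have hI := algOne_int v hcont
  have hF : Continuous fun t : ℝ => ∫ s in (0:ℝ)..t, v s :=
    intervalIntegral.continuous_primitive (fun a b => hI a b) 0
  have hF0 : (fun t : ℝ => ∫ s in (0:ℝ)..t, v s) 0 = 0 := by simp
  have hc : ContinuousAt (fun t : ℝ => ∫ s in (0:ℝ)..t, v s) 0 := hF.continuousAt
  have hε : (0:ℝ) < 1 - u := by linarith
  obtain ⟨δ, hδpos, hδ⟩ := Metric.continuousAt_iff.mp hc (1 - u) hε
  set t := min (δ / 2) (1 / 2) with ht
  have ht0 : 0 < t := lt_min (by linarith) (by norm_num)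
  have ht1 : t < 1 := lt_of_le_of_lt (min_le_right _ _) (by norm_num)
  have htδ : dist t 0 < δ := by
    rw [Real.dist_eq, sub_zero, abs_of_pos ht0]
    exact lt_of_le_of_lt (min_le_left _ _) (by linarith)
  have hFt : |(∫ s in (0:ℝ)..t, v s) - 0| < 1 - u := by
    have := hδ htδ
    simpa [Real.dist_eq, hF0] using this
  have hFt' : (∫ s in (0:ℝ)..t, v s) < 1 - u := by
    rw [sub_zero] at hFt
    exact lt_of_le_of_lt (le_abs_self _) hFt
  refine ⟨t, ht0, ht1, ?_⟩
  have hsplit : (∫ s in (0:ℝ)..t, v s) + (∫ s in t..(1:ℝ), v s) = 1 := by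
    rw [intervalIntegral.integral_add_adjacent_intervals (hI 0 t) (hI t 1), hnorm]
  linarith

end aux

/-- Algorithm 1 has no optimal strategy: every strategy is strictly improvable, the
supremum of achievable utilities is 1, and it is never attained. -/
theorem algorithm_one_no_exact_NE
    (v : ℝ → ℝ) (hcont : Continuous v) (hpos : ∀ t, 0 < v t)
    (hnorm : (∫ t in (0:ℝ)..1, v t) = 1) :
    (∀ x ∈ Set.Icc (0:ℝ) 1, ∀ y ∈ Set.Icc (0:ℝ) 1, ∀ z ∈ Set.Icc (0:ℝ) 1,
      ∃ x' ∈ Set.Icc (0:ℝ) 1, ∃ y' ∈ Set.Icc (0:ℝ) 1, ∃ z' ∈ Set.Icc (0:ℝ) 1,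
        algOneUtility v x y z < algOneUtility v x' y' z') ∧
    IsLUB { u : ℝ | ∃ x ∈ Set.Icc (0:ℝ) 1, ∃ y ∈ Set.Icc (0:ℝ) 1,
      ∃ z ∈ Set.Icc (0:ℝ) 1, u = algOneUtility v x y z } 1 ∧
    (∀ x ∈ Set.Icc (0:ℝ) 1, ∀ y ∈ Set.Icc (0:ℝ) 1, ∀ z ∈ Set.Icc (0:ℝ) 1,
      algOneUtility v x y z < 1) := by
  -- the strict upper bound
  have hlt : ∀ x ∈ Set.Icc (0:ℝ) 1, ∀ y ∈ Set.Icc (0:ℝ) 1, ∀ z ∈ Set.Icc (0:ℝ) 1,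
      algOneUtility v x y z < 1 := by
    intro x hx y hy z hz
    unfold algOneUtility
    split_ifs with h
    · exact algOne_lt_one v hcont hpos hnorm hx.1 h.1 h.2 hz.2
    · norm_num
  -- from any value u < 1, build a triple with utility > u
  have himp : ∀ u : ℝ, u < 1 → ∃ x' ∈ Set.Icc (0:ℝ) 1, ∃ y' ∈ Set.Icc (0:ℝ) 1,
      ∃ z' ∈ Set.Icc (0:ℝ) 1, u < algOneUtility v x' y' z' := by
    intro u hu
    obtain ⟨t, ht0, ht1, hlt'⟩ := algOne_approx v hcont hpos hnorm hu
    refine ⟨0, by norm_num, t, ⟨ht0.le, ht1.le⟩, 1, by norm_num, ?_⟩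
    unfold algOneUtility
    rw [if_pos ⟨ht0, ht1⟩]
    exact lt_of_lt_of_le hlt' (le_max_right _ _)
  refine ⟨?_, ?_, hlt⟩
  · intro x hx y hy z hz
    exact himp _ (hlt x hx y hy z hz)
  · constructor
    · rintro u ⟨x, hx, y, hy, z, hz, rfl⟩
      exact (hlt x hx y hy z hz).le
    · intro b hb
      by_contra hb1
      push_neg at hb1
      obtain ⟨x', hx', y', hy', z', hz', hgt⟩ := himp b hb1
      exact absurd (hb ⟨x', hx', y', hy', z', hz', rfl⟩) (not_le.mpr hgt)
end
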